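/- Assume the forms S_n pre-converge to S. Then condition (iv) implies condition (iii). -/

import Mathlib

open MeasureTheory Filter Topology

noncomputable section

namespace Mosco

variable {E : Type*} [MeasurableSpace E]

/-- The inner product of two real-valued functions with respect to a measure,
`⟨φ, ψ⟩ = ∫ φ ψ dμ`. -/
def ip (μ : Measure E) (φ ψ : E → ℝ) : ℝ := ∫ x, φ x * ψ x ∂μ

/-- The framework of Section 2.1: mutually singular probability measures `ν n`, `n : ℕ`
(`ν 0` playing the role of the limit measure `ν`), such that `L²(E, ν 0)` is separable,
together with disjoint sets `En n` carrying `ν n`, and a linear subset `F = 𝓕 ⊆ 𝓓`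
which is dense in `L²(E, ν 0)`. -/
structure Frame (E : Type*) [MeasurableSpace E] where
  ν : ℕ → Measure E
  prob : ∀ n, IsProbabilityMeasure (ν n)
  singular : ∀ m n, m ≠ n → (ν m).MutuallySingular (ν n)
  separableL2 : TopologicalSpace.SeparableSpace (Lp ℝ 2 (ν 0))
  En : ℕ → Set E
  measEn : ∀ n, MeasurableSet (En n)
  disjEn : ∀ m n, m ≠ n → Disjoint (En m) (En n)
  nullEn : ∀ n, ν n (En n)ᶜ = 0
  F : Set (E → ℝ)
  F_measurable : ∀ φ ∈ F, Measurable φ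
  F_memL2 : ∀ φ ∈ F, ∀ n, MemLp φ 2 (ν n)
  F_tendsto : ∀ φ ∈ F, Tendsto (fun n => ip (ν n) φ φ) atTop (𝓝 (ip (ν 0) φ φ))
  F_linear : ∀ φ ∈ F, ∀ ψ ∈ F, ∀ a b : ℝ, (fun x => a * φ x + b * ψ x) ∈ F
  F_dense : ∀ f : E → ℝ, Measurable f → MemLp f 2 (ν 0) → ∀ ε : ℝ, 0 < ε →
    ∃ φ ∈ F, ip (ν 0) (fun x => f x - φ x) (fun x => f x - φ x) < ε

/-- The set `𝓓`: everywhere defined measurable functions lying in every `L²(E, ν n)`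
whose `ν n`-norms converge to the `ν 0`-norm. -/
def Frame.D (fr : Frame E) : Set (E → ℝ) :=
  {φ | Measurable φ ∧ (∀ n, MemLp φ 2 (fr.ν n)) ∧
    Tendsto (fun n => ip (fr.ν n) φ φ) atTop (𝓝 (ip (fr.ν 0) φ φ))}

/-- The set `𝓒`: elements of `𝓓` satisfying conditions (c1) and (c2). -/
def Frame.C (fr : Frame E) : Set (E → ℝ) :=
  {φ | φ ∈ fr.D ∧ (∀ n, 1 ≤ n → ∃ g ∈ fr.F, φ =ᵐ[fr.ν n] g) ∧
    ∀ ψ ∈ fr.F, Tendsto (fun n => ip (fr.ν n) φ ψ) atTop (𝓝 (ip (fr.ν 0) φ ψ))}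

/-- The set `𝓥` of multipliers mapping `𝓓` into `𝓓` and `𝓕` into `𝓕`. -/
def Frame.V (fr : Frame E) : Set (E → ℝ) :=
  {ψ | Measurable ψ ∧ (∀ n, MemLp ψ 2 (fr.ν n)) ∧
    (∀ σ ∈ fr.D, (fun x => σ x * ψ x) ∈ fr.D) ∧
    (∀ τ ∈ fr.F, (fun x => τ x * ψ x) ∈ fr.F)}

/-- `w`-convergence of a sequence `φs` (with `φs n` regarded as an element of
`L²(E, ν n)`) to `φ ∈ L²(E, ν 0)`. -/
def Frame.WConv (fr : Frame E) (φs : ℕ → E → ℝ) (φ : E → ℝ) : Prop :=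
  ∀ ψ ∈ fr.C, Tendsto (fun n => ip (fr.ν n) (φs n) ψ) atTop (𝓝 (ip (fr.ν 0) φ ψ))

/-- `s`-convergence: `w`-convergence together with convergence of the norms. -/
def Frame.SConv (fr : Frame E) (φs : ℕ → E → ℝ) (φ : E → ℝ) : Prop :=
  fr.WConv φs φ ∧
  Tendsto (fun n => ip (fr.ν n) (φs n) (φs n)) atTop (𝓝 (ip (fr.ν 0) φ φ))

open Classical

/-- The `L²(μ)`-class of a function (zero if the function is not square-integrable). -/
def toL2 (μ : Measure E) (φ : E → ℝ) : Lp ℝ 2 μ :=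
  if h : MemLp φ 2 μ then h.toLp φ else 0

/-- A strongly continuous semigroup of bounded linear operators on `L²(E, μ)`. -/
structure Semigroup2 {E : Type*} [MeasurableSpace E] (μ : Measure E) where
  T : ℝ → Lp ℝ 2 μ →L[ℝ] Lp ℝ 2 μ
  T_zero : T 0 = ContinuousLinearMap.id ℝ (Lp ℝ 2 μ)
  T_add : ∀ s t : ℝ, 0 ≤ s → 0 ≤ t → T (s + t) = (T s).comp (T t)
  strongCont : ∀ f : Lp ℝ 2 μ, Tendsto (fun t => T t f) (𝓝[≥] (0:ℝ)) (𝓝 f)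

namespace Semigroup2

variable {μ : Measure E}

/-- The semigroup is a contraction semigroup. -/
def IsContraction (sg : Semigroup2 μ) : Prop := ∀ t : ℝ, 0 ≤ t → ‖sg.T t‖ ≤ 1

/-- The adjoint (dual) semigroup `T'`. -/
def dual (sg : Semigroup2 μ) (t : ℝ) : Lp ℝ 2 μ →L[ℝ] Lp ℝ 2 μ :=
  ContinuousLinearMap.adjoint (sg.T t)

/-- Membership in the domain `D(A)` of the generator. -/
def memDom (sg : Semigroup2 μ) (f : Lp ℝ 2 μ) : Prop :=
  ∃ g : Lp ℝ 2 μ, Tendsto (fun t : ℝ => t⁻¹ • (sg.T t f - f)) (𝓝[>] (0:ℝ)) (𝓝 g)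

/-- The generator `A` (zero off its domain). -/
def gen (sg : Semigroup2 μ) (f : Lp ℝ 2 μ) : Lp ℝ 2 μ :=
  if h : sg.memDom f then Exists.choose h else 0

/-- Membership in the domain `D(A')` of the adjoint generator. -/
def memDom' (sg : Semigroup2 μ) (f : Lp ℝ 2 μ) : Prop :=
  ∃ g : Lp ℝ 2 μ, Tendsto (fun t : ℝ => t⁻¹ • (sg.dual t f - f)) (𝓝[>] (0:ℝ)) (𝓝 g)

/-- The adjoint generator `A'` (zero off its domain). -/
def gen' (sg : Semigroup2 μ) (f : Lp ℝ 2 μ) : Lp ℝ 2 μ :=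
  if h : sg.memDom' f then Exists.choose h else 0

/-- The resolvent `G_β = (β - A)⁻¹ = ∫_0^∞ e^{-βt} T_t dt`. -/
def res (sg : Semigroup2 μ) (β : ℝ) (f : Lp ℝ 2 μ) : Lp ℝ 2 μ :=
  ∫ t in Set.Ioi (0:ℝ), Real.exp (-β * t) • sg.T t f

/-- The adjoint resolvent `G'_β`. -/
def res' (sg : Semigroup2 μ) (β : ℝ) (f : Lp ℝ 2 μ) : Lp ℝ 2 μ :=
  ∫ t in Set.Ioi (0:ℝ), Real.exp (-β * t) • sg.dual t f

/-- `u ∈ D(A) = D(S)`, at the level of functions. -/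
def memD (sg : Semigroup2 μ) (u : E → ℝ) : Prop := sg.memDom (toL2 μ u)

/-- `u ∈ D(A')`, at the level of functions. -/
def memD' (sg : Semigroup2 μ) (u : E → ℝ) : Prop := sg.memDom' (toL2 μ u)

/-- `A u`, at the level of functions. -/
def Af (sg : Semigroup2 μ) (u : E → ℝ) : E → ℝ := sg.gen (toL2 μ u)

/-- `A' u`, at the level of functions. -/
def Af' (sg : Semigroup2 μ) (u : E → ℝ) : E → ℝ := sg.gen' (toL2 μ u)

/-- `G_β u`, at the level of functions. -/
def Res (sg : Semigroup2 μ) (β : ℝ) (u : E → ℝ) : E → ℝ := sg.res β (toL2 μ u)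

/-- `G'_β u`, at the level of functions. -/
def Res' (sg : Semigroup2 μ) (β : ℝ) (u : E → ℝ) : E → ℝ := sg.res' β (toL2 μ u)

/-- `T_t u`, at the level of functions. -/
def Tf (sg : Semigroup2 μ) (t : ℝ) (u : E → ℝ) : E → ℝ := sg.T t (toL2 μ u)

/-- `T'_t u`, at the level of functions. -/
def Tf' (sg : Semigroup2 μ) (t : ℝ) (u : E → ℝ) : E → ℝ := sg.dual t (toL2 μ u)

/-- The bilinear form `S(u, v) = ⟨-A u, v⟩` associated with the semigroup. -/
def S (sg : Semigroup2 μ) (u v : E → ℝ) : ℝ := ip μ (fun x => -(sg.Af u x)) v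

/-- `S_β(u, v) = β ⟨u, v⟩ + S(u, v)`. -/
def Sb (sg : Semigroup2 μ) (β : ℝ) (u v : E → ℝ) : ℝ := β * ip μ u v + sg.S u v

end Semigroup2

/-- Definition 2.4 (i) and (ii): the forms `S n` pre-converge to `S 0`.
Here `sg n` is the semigroup on `L²(E, ν n)` and `sg 0` the limiting one. -/
def PreConv (fr : Frame E) (sg : ∀ n, Semigroup2 (fr.ν n)) : Prop :=
  (∀ φ : E → ℝ, Measurable φ → MemLp φ 2 (fr.ν 0) →
    ∀ nk : ℕ → ℕ, StrictMono nk →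
    ∀ φk : ℕ → E → ℝ, (∀ k, φk k ∈ fr.C ∧ (sg (nk k)).memD (φk k)) →
    (∀ ψ ∈ fr.C, Tendsto (fun k => ip (fr.ν (nk k)) (φk k) ψ)
      atTop (𝓝 (ip (fr.ν 0) φ ψ))) →
    (∃ M : ℝ, ∀ k, ip (fr.ν (nk k)) ((sg (nk k)).Af (φk k)) ((sg (nk k)).Af (φk k)) ≤ M) →
    (sg 0).memD φ ∧
      (sg 0).S φ φ ≤ liminf (fun k => (sg (nk k)).S (φk k) (φk k)) atTop) ∧
  (∀ ψ : E → ℝ, Measurable ψ → MemLp ψ 2 (fr.ν 0) → (sg 0).memD ψ →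
    ∃ ψs : ℕ → E → ℝ, (∀ n, ψs n ∈ fr.C ∧ (sg n).memD (ψs n)) ∧
      fr.SConv ψs ψ ∧
      (∃ M : ℝ, ∀ n, ip (fr.ν n) ((sg n).Af (ψs n)) ((sg n).Af (ψs n)) ≤ M) ∧
      limsup (fun n => (sg n).S (ψs n) (ψs n)) atTop ≤ (sg 0).S ψ ψ)

/-- Condition (iii) of Definition 2.4. -/
def CondIII (fr : Frame E) (sg : ∀ n, Semigroup2 (fr.ν n)) : Prop :=
  ∀ β : ℝ, 0 < β →
  ∀ u : E → ℝ, Measurable u → MemLp u 2 (fr.ν 0) → (sg 0).memD u →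
  ∀ us : ℕ → E → ℝ,
    (∀ n, us n ∈ fr.C ∧ (sg n).memD (us n) ∧ ∃ c ∈ fr.C, (sg n).Af (us n) =ᵐ[fr.ν n] c) →
    (∃ w : E → ℝ, Measurable w ∧ MemLp w 2 (fr.ν 0) ∧ fr.WConv us w) →
    (∃ M : ℝ, ∀ n, ip (fr.ν n) ((sg n).Af (us n)) ((sg n).Af (us n)) ≤ M) →
    (∀ ψ ∈ fr.C, ∀ ψs : ℕ → E → ℝ, (∀ n, ψs n ∈ fr.C) → fr.SConv ψs ψ →
      Tendsto (fun n => (sg n).Sb β (us n) (ψs n)) atTop (𝓝 ((sg 0).Sb β u ψ))) →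
    ∀ ψ : E → ℝ, Measurable ψ → MemLp ψ 2 (fr.ν 0) → (sg 0).memD ψ →
    ∀ ψs : ℕ → E → ℝ, (∀ n, ψs n ∈ fr.C ∧ (sg n).memD (ψs n)) → fr.SConv ψs ψ →
      (∃ M : ℝ, ∀ n, ip (fr.ν n) ((sg n).Af (ψs n)) ((sg n).Af (ψs n)) ≤ M) →
      limsup (fun n => (sg n).S (ψs n) (ψs n)) atTop ≤ (sg 0).S ψ ψ →
      Tendsto (fun n => (sg n).Sb β (ψs n) (us n)) atTop (𝓝 ((sg 0).Sb β ψ u))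

/-- Condition (iv) of Lemma 2.6. -/
def CondIV (fr : Frame E) (sg : ∀ n, Semigroup2 (fr.ν n)) : Prop :=
  ∀ β : ℝ, 0 < β →
  ∀ u : E → ℝ, Measurable u → MemLp u 2 (fr.ν 0) → (sg 0).memD u →
  ∀ us : ℕ → E → ℝ,
    (∀ n, us n ∈ fr.C ∧ (sg n).memD (us n) ∧ ∃ c ∈ fr.C, (sg n).Af (us n) =ᵐ[fr.ν n] c) →
    (∃ w : E → ℝ, Measurable w ∧ MemLp w 2 (fr.ν 0) ∧ fr.WConv us w) →
    (∃ M : ℝ, ∀ n, ip (fr.ν n) ((sg n).Af (us n)) ((sg n).Af (us n)) ≤ M) →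
    fr.WConv (fun n x => β * us n x - (sg n).Af (us n) x)
      (fun x => β * u x - (sg 0).Af u x) →
    fr.WConv us u

/-- The forms converge: pre-convergence together with condition (iii). -/
def Conv (fr : Frame E) (sg : ∀ n, Semigroup2 (fr.ν n)) : Prop :=
  PreConv fr sg ∧ CondIII fr sg

/-- Condition (c3): resolvents and adjoint resolvents of elements of `𝓒`
coincide a.e. with elements of `𝓒`. -/
def CondC3 (fr : Frame E) (sg : ∀ n, Semigroup2 (fr.ν n)) : Prop :=
  ∀ g ∈ fr.C, ∀ β : ℝ, 0 < β →
    (∃ u ∈ fr.C, (sg 0).Res β g =ᵐ[fr.ν 0] u) ∧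
    (∀ n, 1 ≤ n → ∃ u ∈ fr.C, (sg n).Res β g =ᵐ[fr.ν n] u) ∧
    (∃ u ∈ fr.C, (sg 0).Res' β g =ᵐ[fr.ν 0] u) ∧
    (∀ n, 1 ≤ n → ∃ u ∈ fr.C, (sg n).Res' β g =ᵐ[fr.ν n] u)

/-- Condition (c4): `D(S) ⊆ 𝓒` and `A(D(S)) ⊆ 𝓒`, up to `ν 0`-a.e. equality. -/
def CondC4 (fr : Frame E) (sg : ∀ n, Semigroup2 (fr.ν n)) : Prop :=
  ∀ φ : E → ℝ, Measurable φ → MemLp φ 2 (fr.ν 0) → (sg 0).memD φ →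
    (∃ u ∈ fr.C, φ =ᵐ[fr.ν 0] u) ∧ (∃ u ∈ fr.C, (sg 0).Af φ =ᵐ[fr.ν 0] u)

/-- Condition (c5): semigroups and adjoint semigroups applied to elements of `𝓒`
coincide a.e. with elements of `𝓒`. -/
def CondC5 (fr : Frame E) (sg : ∀ n, Semigroup2 (fr.ν n)) : Prop :=
  ∀ g ∈ fr.C, ∀ t : ℝ, 0 ≤ t →
    (∃ u ∈ fr.C, (sg 0).Tf t g =ᵐ[fr.ν 0] u) ∧
    (∀ n, 1 ≤ n → ∃ u ∈ fr.C, (sg n).Tf t g =ᵐ[fr.ν n] u) ∧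
    (∃ u ∈ fr.C, (sg 0).Tf' t g =ᵐ[fr.ν 0] u) ∧
    (∀ n, 1 ≤ n → ∃ u ∈ fr.C, (sg n).Tf' t g =ᵐ[fr.ν n] u)


/-!
Testing the hypothesis of (iii) against constant sequences shows that `β uₙ - Aₙ uₙ`
w-converges to `β u - A u`, so (iv) gives `uₙ → u`, and then `Aₙ uₙ → A u`, weakly.
A w-convergent sequence is bounded (gliding hump over the disjoint sets `Eₙ`), and a bounded
w-convergent sequence paired with an s-convergent one converges (approximate the s-limit in the
dense set `𝓕`); hence `Sₙ(uₙ, ψₙ) → S(u, ψ)`, while `Sₙ(ψₙ, ψₙ) → S(ψ, ψ)` by (i) and the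
recovery property of `ψₙ`. Finally (i) applied to `t ψₙ + uₙ` for every real `t` bounds a
quadratic polynomial in `t` from below by its limit, which forces the remaining cross term
`Sₙ(ψₙ, uₙ)` to converge to `S(ψ, u)`.
-/

section InnerProduct

variable {μ : Measure E} {f g v : E → ℝ}

lemma toL2_of_memLp (hf : MemLp f 2 μ) : toL2 μ f = hf.toLp f := dif_pos hf

lemma toL2_smul_add (hf : MemLp f 2 μ) (hg : MemLp g 2 μ) (s : ℝ) :
    toL2 μ (fun x => s * f x + g x) = s • toL2 μ f + toL2 μ g := by
  change toL2 μ (s • f + g) = _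
  rw [toL2_of_memLp hf, toL2_of_memLp hg, toL2_of_memLp ((hf.const_smul s).add hg),
    MemLp.toLp_add (hf.const_smul s) hg, MemLp.toLp_const_smul s hf]

lemma toL2_linear (hf : MemLp f 2 μ) (hg : MemLp g 2 μ) (a b : ℝ) :
    toL2 μ (fun x => a * f x + b * g x) = a • toL2 μ f + b • toL2 μ g := by
  change toL2 μ (a • f + b • g) = _
  rw [toL2_of_memLp hf, toL2_of_memLp hg,
    toL2_of_memLp ((hf.const_smul a).add (hg.const_smul b)),
    MemLp.toLp_add (hf.const_smul a) (hg.const_smul b), MemLp.toLp_const_smul a hf,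
    MemLp.toLp_const_smul b hg]

lemma toL2_sub (hf : MemLp f 2 μ) (hg : MemLp g 2 μ) :
    toL2 μ (fun x => f x - g x) = toL2 μ f - toL2 μ g := by
  change toL2 μ (f - g) = _
  rw [toL2_of_memLp hf, toL2_of_memLp hg, toL2_of_memLp (hf.sub hg), MemLp.toLp_sub hf hg]

lemma ip_eq_inner (hf : MemLp f 2 μ) (hg : MemLp g 2 μ) :
    ip μ f g = inner ℝ (toL2 μ f) (toL2 μ g) := by
  rw [toL2_of_memLp hf, toL2_of_memLp hg, L2.inner_def]
  refine integral_congr_ae ?_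
  filter_upwards [hf.coeFn_toLp, hg.coeFn_toLp] with x hfx hgx
  rw [hfx, hgx, Real.inner_apply, mul_comm]

lemma ip_comm (f g : E → ℝ) : ip μ f g = ip μ g f := by
  simp only [ip, mul_comm]

lemma ip_congr_left (h : f =ᵐ[μ] g) : ip μ f v = ip μ g v :=
  integral_congr_ae (h.mono fun x hx => by simp only [hx])

lemma ip_congr_right (h : f =ᵐ[μ] g) : ip μ v f = ip μ v g :=
  integral_congr_ae (h.mono fun x hx => by simp only [hx])

lemma ip_neg_left (f g : E → ℝ) : ip μ (fun x => -f x) g = -ip μ f g := by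
  simp only [ip, neg_mul, integral_neg]

lemma ip_const_mul_left (c : ℝ) (f g : E → ℝ) : ip μ (fun x => c * f x) g = c * ip μ f g := by
  simp only [ip, mul_assoc, integral_const_mul]

lemma ip_self_nonneg (hf : MemLp f 2 μ) : 0 ≤ ip μ f f := by
  rw [ip_eq_inner hf hf]
  exact real_inner_self_nonneg

lemma abs_ip_le_of_le {A B : ℝ} (hf : MemLp f 2 μ) (hg : MemLp g 2 μ)
    (hA : ip μ f f ≤ A) (hB : ip μ g g ≤ B) : |ip μ f g| ≤ √A * √B := by
  have hnorm : ∀ {h : E → ℝ} (hh : MemLp h 2 μ), ‖toL2 μ h‖ = √(ip μ h h) := fun hh => by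
    rw [ip_eq_inner hh hh, real_inner_self_eq_norm_sq, Real.sqrt_sq (norm_nonneg _)]
  calc |ip μ f g| ≤ ‖toL2 μ f‖ * ‖toL2 μ g‖ := by
        rw [ip_eq_inner hf hg]; exact abs_real_inner_le_norm _ _
    _ ≤ √A * √B := by
        rw [hnorm hf, hnorm hg]
        exact mul_le_mul (Real.sqrt_le_sqrt hA) (Real.sqrt_le_sqrt hB) (by positivity)
          (by positivity)

lemma ip_smul_add_left (hf : MemLp f 2 μ) (hg : MemLp g 2 μ) (hv : MemLp v 2 μ) (s : ℝ) :
    ip μ (fun x => s * f x + g x) v = s * ip μ f v + ip μ g v := by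
  have hfg : MemLp (fun x => s * f x + g x) 2 μ := (hf.const_mul s).add hg
  rw [ip_eq_inner hfg hv, toL2_smul_add hf hg, inner_add_left,
    real_inner_smul_left, ip_eq_inner hf hv, ip_eq_inner hg hv]

lemma ip_smul_add_right (hf : MemLp f 2 μ) (hg : MemLp g 2 μ) (hv : MemLp v 2 μ) (s : ℝ) :
    ip μ v (fun x => s * f x + g x) = s * ip μ v f + ip μ v g := by
  rw [ip_comm, ip_smul_add_left hf hg hv, ip_comm f, ip_comm g]

lemma ip_sub_left (hf : MemLp f 2 μ) (hg : MemLp g 2 μ) (hv : MemLp v 2 μ) :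
    ip μ (fun x => f x - g x) v = ip μ f v - ip μ g v := by
  have hfg : MemLp (fun x => f x - g x) 2 μ := hf.sub hg
  rw [ip_eq_inner hfg hv, toL2_sub hf hg, inner_sub_left, ip_eq_inner hf hv,
    ip_eq_inner hg hv]

lemma ip_sub_right (hf : MemLp f 2 μ) (hg : MemLp g 2 μ) (hv : MemLp v 2 μ) :
    ip μ v (fun x => f x - g x) = ip μ v f - ip μ v g := by
  rw [ip_comm, ip_sub_left hf hg hv, ip_comm f, ip_comm g]

lemma ip_sub_self (hf : MemLp f 2 μ) (hg : MemLp g 2 μ) :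
    ip μ (fun x => f x - g x) (fun x => f x - g x) = ip μ f f - 2 * ip μ f g + ip μ g g := by
  have hfg : MemLp (fun x => f x - g x) 2 μ := hf.sub hg
  rw [ip_eq_inner hfg hfg, toL2_sub hf hg, real_inner_sub_sub_self,
    ip_eq_inner hf hf, ip_eq_inner hf hg, ip_eq_inner hg hg]

lemma ip_linear_self (hf : MemLp f 2 μ) (hg : MemLp g 2 μ) (a b : ℝ) :
    ip μ (fun x => a * f x + b * g x) (fun x => a * f x + b * g x)
      = a ^ 2 * ip μ f f + 2 * (a * b) * ip μ f g + b ^ 2 * ip μ g g := by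
  have hfg : MemLp (fun x => a * f x + b * g x) 2 μ := (hf.const_mul a).add (hg.const_mul b)
  rw [ip_eq_inner hfg hfg, toL2_linear hf hg, ip_eq_inner hf hf, ip_eq_inner hf hg,
    ip_eq_inner hg hg]
  simp only [inner_add_left, inner_add_right, real_inner_smul_left, real_inner_smul_right,
    real_inner_comm (toL2 μ f)]
  ring

lemma ip_smul_add_self (hf : MemLp f 2 μ) (hg : MemLp g 2 μ) (s : ℝ) :
    ip μ (fun x => s * f x + g x) (fun x => s * f x + g x)
      = s ^ 2 * ip μ f f + 2 * s * ip μ f g + ip μ g g := by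
  have hfg : MemLp (fun x => s * f x + g x) 2 μ := (hf.const_mul s).add hg
  rw [ip_eq_inner hfg hfg, toL2_smul_add hf hg, ip_eq_inner hf hf, ip_eq_inner hf hg,
    ip_eq_inner hg hg]
  simp only [inner_add_left, inner_add_right, real_inner_smul_left, real_inner_smul_right,
    real_inner_comm (toL2 μ f)]
  ring

lemma ip_smul_add_self_le (hf : MemLp f 2 μ) (hg : MemLp g 2 μ) (s : ℝ) :
    ip μ (fun x => s * f x + g x) (fun x => s * f x + g x)
      ≤ 2 * (s ^ 2 * ip μ f f + ip μ g g) := by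
  have h := ip_self_nonneg (μ := μ) (f := fun x => -s * f x + g x) ((hf.const_mul (-s)).add hg)
  rw [ip_smul_add_self hf hg] at h ⊢
  nlinarith

end InnerProduct

lemma tendsto_of_forall_approx {x : ℕ → ℝ} {x₀ : ℝ}
    (h : ∀ ε > 0, ∃ (y : ℕ → ℝ) (y₀ : ℝ), Tendsto y atTop (𝓝 y₀) ∧
      (∀ᶠ n in atTop, |x n - y n| ≤ ε) ∧ |x₀ - y₀| ≤ ε) :
    Tendsto x atTop (𝓝 x₀) := by
  refine Metric.tendsto_nhds.mpr fun ε hε => ?_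
  obtain ⟨y, y₀, hy, hxy, hxy₀⟩ := h (ε / 3) (by positivity)
  filter_upwards [Metric.tendsto_nhds.mp hy (ε / 3) (by positivity), hxy] with n hyn hxyn
  rw [Real.dist_eq] at hyn ⊢
  have h₁ := abs_sub_le (x n) (y n) x₀
  have h₂ := abs_sub_le (y n) y₀ x₀
  rw [abs_sub_comm y₀] at h₂
  linarith

lemma tendsto_of_comp_strictMono_of_eq_off_range {α : Type*} [TopologicalSpace α]
    {a : ℕ → α} {y : α} {nk : ℕ → ℕ} (hnk : StrictMono nk)
    (hoff : ∀ n ∉ Set.range nk, a n = y) (h : Tendsto (a ∘ nk) atTop (𝓝 y)) :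
    Tendsto a atTop (𝓝 y) := by
  intro s hs
  obtain ⟨K, hK⟩ := mem_atTop_sets.mp (h hs)
  refine mem_atTop_sets.mpr ⟨nk K, fun n hn => ?_⟩
  by_cases hmem : n ∈ Set.range nk
  · obtain ⟨k, rfl⟩ := hmem
    exact hK k (hnk.le_iff_le.mp hn)
  · rw [Set.mem_preimage, hoff n hmem]
    exact mem_of_mem_nhds hs

/-- Evaluating at `t = ±T` with `T` large isolates the linear coefficient. -/
lemma tendsto_of_le_liminf_quadratic {a b c : ℕ → ℝ} {a₀ b₀ c₀ : ℝ}
    (ha : Tendsto a atTop (𝓝 a₀)) (hb : ∃ B, ∀ n, |b n| ≤ B) (hc : ∃ C, ∀ n, |c n| ≤ C)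
    (h : ∀ t, a₀ * t ^ 2 + b₀ * t + c₀ ≤ liminf (fun n => a n * t ^ 2 + b n * t + c n) atTop) :
    Tendsto b atTop (𝓝 b₀) := by
  obtain ⟨B, hB⟩ := hb
  obtain ⟨C, hC⟩ := hc
  have hev : ∀ t, ∀ᶠ n in atTop, a₀ * t ^ 2 + b₀ * t + c₀ - 1 < a n * t ^ 2 + b n * t + c n := by
    intro t
    refine eventually_lt_of_lt_liminf (by linarith [h t])
      (isBoundedUnder_of_eventually_ge (a := (a₀ - 1) * t ^ 2 - B * |t| - C) ?_)
    filter_upwards [ha.eventually_const_lt (sub_one_lt a₀)] with n han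
    have hbt : -(B * |t|) ≤ b n * t := by
      have := mul_le_mul_of_nonneg_right (hB n) (abs_nonneg t)
      rw [← abs_mul] at this
      linarith [neg_abs_le (b n * t)]
    have hct : -C ≤ c n := by linarith [neg_abs_le (c n), hC n]
    have hat : (a₀ - 1) * t ^ 2 ≤ a n * t ^ 2 := by nlinarith [sq_nonneg t]
    linarith
  refine Metric.tendsto_nhds.mpr fun ε hε => ?_
  set K := |c₀| + C + 2
  have hK : 0 < K := by linarith [abs_nonneg c₀, (abs_nonneg (c 0)).trans (hC 0)]
  set T := 2 * K / ε
  have hT : 0 < T := by positivity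
  have hKT : K = ε / 2 * T := by simp only [T]; field_simp
  have hclose : ∀ᶠ n in atTop, a n * T ^ 2 < a₀ * T ^ 2 + 1 :=
    (ha.mul_const (T ^ 2)).eventually_lt_const (lt_add_one _)
  filter_upwards [hev T, hev (-T), hclose] with n hplus hminus hn
  have hcn : c n ≤ C := (le_abs_self _).trans (hC n)
  have hc₀ : -c₀ ≤ |c₀| := neg_le_abs c₀
  rw [Real.dist_eq, abs_sub_lt_iff]
  constructor
  · have h₁ : (b n - b₀) * T < ε / 2 * T := by rw [← hKT]; linarith
    linarith [lt_of_mul_lt_mul_right h₁ hT.le]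
  · have h₁ : (b₀ - b n) * T < ε / 2 * T := by rw [← hKT]; linarith
    linarith [lt_of_mul_lt_mul_right h₁ hT.le]

namespace Semigroup2

variable {μ : Measure E} (sg : Semigroup2 μ)

lemma tendsto_gen {f : Lp ℝ 2 μ} (h : sg.memDom f) :
    Tendsto (fun t : ℝ => t⁻¹ • (sg.T t f - f)) (𝓝[>] 0) (𝓝 (sg.gen f)) := by
  rw [gen, dif_pos h]
  exact h.choose_spec

lemma tendsto_smul_add_gen {f g : Lp ℝ 2 μ} (hf : sg.memDom f) (hg : sg.memDom g) (s : ℝ) :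
    Tendsto (fun t : ℝ => t⁻¹ • (sg.T t (s • f + g) - (s • f + g))) (𝓝[>] 0)
      (𝓝 (s • sg.gen f + sg.gen g)) := by
  refine (((sg.tendsto_gen hf).const_smul s).add (sg.tendsto_gen hg)).congr fun t => ?_
  simp only [map_add, map_smul]
  module

lemma memDom_smul_add {f g : Lp ℝ 2 μ} (hf : sg.memDom f) (hg : sg.memDom g) (s : ℝ) :
    sg.memDom (s • f + g) :=
  ⟨_, sg.tendsto_smul_add_gen hf hg s⟩

lemma gen_smul_add {f g : Lp ℝ 2 μ} (hf : sg.memDom f) (hg : sg.memDom g) (s : ℝ) :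
    sg.gen (s • f + g) = s • sg.gen f + sg.gen g :=
  tendsto_nhds_unique (sg.tendsto_gen (sg.memDom_smul_add hf hg s))
    (sg.tendsto_smul_add_gen hf hg s)

variable {f g : E → ℝ}

lemma memLp_Af (f : E → ℝ) : MemLp (sg.Af f) 2 μ := Lp.memLp _

lemma memD_smul_add (hf : MemLp f 2 μ) (hg : MemLp g 2 μ) (hdf : sg.memD f) (hdg : sg.memD g)
    (s : ℝ) : sg.memD (fun x => s * f x + g x) := by
  rw [memD, toL2_smul_add hf hg]
  exact sg.memDom_smul_add hdf hdg s

lemma Af_smul_add (hf : MemLp f 2 μ) (hg : MemLp g 2 μ) (hdf : sg.memD f) (hdg : sg.memD g)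
    (s : ℝ) : sg.Af (fun x => s * f x + g x) =ᵐ[μ] fun x => s * sg.Af f x + sg.Af g x := by
  rw [Af, toL2_smul_add hf hg, sg.gen_smul_add hdf hdg s]
  filter_upwards [Lp.coeFn_add (s • sg.gen (toL2 μ f)) (sg.gen (toL2 μ g)),
    Lp.coeFn_smul s (sg.gen (toL2 μ f))] with x hadd hsmul
  rw [hadd, Pi.add_apply, hsmul, Pi.smul_apply, smul_eq_mul]
  rfl

lemma S_eq_neg_ip (f g : E → ℝ) : sg.S f g = -ip μ (sg.Af f) g := ip_neg_left _ _

lemma ip_Af_eq_sub_Sb (β : ℝ) (f g : E → ℝ) : ip μ (sg.Af f) g = β * ip μ f g - sg.Sb β f g := by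
  rw [Sb, S_eq_neg_ip]
  ring

lemma Sb_eq_ip (hf : MemLp f 2 μ) (hg : MemLp g 2 μ) (β : ℝ) :
    sg.Sb β f g = ip μ (fun x => β * f x - sg.Af f x) g := by
  rw [ip_sub_left (hf.const_mul β) (sg.memLp_Af f) hg, ip_const_mul_left, ip_Af_eq_sub_Sb sg β]
  ring

lemma S_smul_add_self (hf : MemLp f 2 μ) (hg : MemLp g 2 μ) (hdf : sg.memD f) (hdg : sg.memD g)
    (t : ℝ) :
    sg.S (fun x => t * f x + g x) (fun x => t * f x + g x)
      = sg.S f f * t ^ 2 + sg.S f g * t + sg.S g f * t + sg.S g g := by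
  have hfg : MemLp (fun x => t * f x + g x) 2 μ := (hf.const_mul t).add hg
  simp only [S_eq_neg_ip]
  rw [ip_congr_left (sg.Af_smul_add hf hg hdf hdg t),
    ip_smul_add_left (sg.memLp_Af f) (sg.memLp_Af g) hfg, ip_smul_add_right hf hg (sg.memLp_Af f),
    ip_smul_add_right hf hg (sg.memLp_Af g)]
  ring

lemma ip_Af_smul_add_self_le (hf : MemLp f 2 μ) (hg : MemLp g 2 μ) (hdf : sg.memD f)
    (hdg : sg.memD g) (t : ℝ) :
    ip μ (sg.Af fun x => t * f x + g x) (sg.Af fun x => t * f x + g x)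
      ≤ 2 * (t ^ 2 * ip μ (sg.Af f) (sg.Af f) + ip μ (sg.Af g) (sg.Af g)) := by
  have hAfg := sg.Af_smul_add hf hg hdf hdg t
  rw [ip_congr_left hAfg, ip_congr_right hAfg]
  exact ip_smul_add_self_le (sg.memLp_Af f) (sg.memLp_Af g) t

end Semigroup2

namespace Frame

variable (fr : Frame E)

lemma memLp_of_mem_C {g : E → ℝ} (hg : g ∈ fr.C) (n : ℕ) : MemLp g 2 (fr.ν n) := hg.1.2.1 n

lemma const_mul_mem_F {φ : E → ℝ} (hφ : φ ∈ fr.F) (c : ℝ) : (fun x => c * φ x) ∈ fr.F := by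
  simpa using fr.F_linear φ hφ φ hφ c 0

lemma zero_mem_F {φ : E → ℝ} (hφ : φ ∈ fr.F) : (0 : E → ℝ) ∈ fr.F := by
  have h := fr.const_mul_mem_F hφ 0
  simp only [zero_mul] at h
  exact h

lemma mem_C_of_mem_F {φ : E → ℝ} (hφ : φ ∈ fr.F) : φ ∈ fr.C := by
  refine ⟨⟨fr.F_measurable φ hφ, fr.F_memL2 φ hφ, fr.F_tendsto φ hφ⟩,
    fun n _ => ⟨φ, hφ, EventuallyEq.rfl⟩, fun χ hχ => ?_⟩
  have hpolar : ∀ n, ip (fr.ν n) φ χ =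
      (ip (fr.ν n) (fun x => 1 * φ x + 1 * χ x) (fun x => 1 * φ x + 1 * χ x) -
        ip (fr.ν n) (fun x => 1 * φ x + -1 * χ x) (fun x => 1 * φ x + -1 * χ x)) / 4 := by
    intro n
    rw [ip_linear_self (fr.F_memL2 φ hφ n) (fr.F_memL2 χ hχ n),
      ip_linear_self (fr.F_memL2 φ hφ n) (fr.F_memL2 χ hχ n)]
    ring
  simp only [hpolar]
  exact ((fr.F_tendsto _ (fr.F_linear φ hφ χ hχ 1 1)).sub
    (fr.F_tendsto _ (fr.F_linear φ hφ χ hχ 1 (-1)))).div_const 4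

lemma tendsto_ip_of_approx {as ψs : ℕ → E → ℝ} {a ψ : E → ℝ} {B : ℝ}
    (has : ∀ n, MemLp (as n) 2 (fr.ν n)) (hB : ∀ n, ip (fr.ν n) (as n) (as n) ≤ B)
    (ha : MemLp a 2 (fr.ν 0)) (hψm : Measurable ψ) (hψ : MemLp ψ 2 (fr.ν 0))
    (hψs : ∀ n, MemLp (ψs n) 2 (fr.ν n))
    (hw : ∀ χ ∈ fr.F, Tendsto (fun n => ip (fr.ν n) (as n) χ) atTop (𝓝 (ip (fr.ν 0) a χ)))
    (hs : ∀ χ ∈ fr.F, Tendsto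
      (fun n => ip (fr.ν n) (fun x => ψs n x - χ x) (fun x => ψs n x - χ x)) atTop
      (𝓝 (ip (fr.ν 0) (fun x => ψ x - χ x) (fun x => ψ x - χ x)))) :
    Tendsto (fun n => ip (fr.ν n) (as n) (ψs n)) atTop (𝓝 (ip (fr.ν 0) a ψ)) := by
  refine tendsto_of_forall_approx fun ε hε => ?_
  set δ := ε / (√B + √(ip (fr.ν 0) a a) + 1)
  have hδ : 0 < δ := by positivity
  have hεδ : (√B + √(ip (fr.ν 0) a a) + 1) * δ = ε := by simp only [δ]; field_simp
  have hBδ : √B * √(δ ^ 2) ≤ ε := by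
    rw [Real.sqrt_sq hδ.le]; nlinarith [mul_nonneg (Real.sqrt_nonneg (ip (fr.ν 0) a a)) hδ.le]
  have haδ : √(ip (fr.ν 0) a a) * √(δ ^ 2) ≤ ε := by
    rw [Real.sqrt_sq hδ.le]; nlinarith [mul_nonneg (Real.sqrt_nonneg B) hδ.le]
  obtain ⟨χ, hχ, hψχ⟩ := fr.F_dense ψ hψm hψ (δ ^ 2) (by positivity)
  have hχm := fr.F_memL2 χ hχ
  refine ⟨fun n => ip (fr.ν n) (as n) χ, ip (fr.ν 0) a χ, hw χ hχ, ?_, ?_⟩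
  · filter_upwards [(hs χ hχ).eventually_lt_const hψχ] with n hn
    rw [← ip_sub_right (hψs n) (hχm n) (has n)]
    exact (abs_ip_le_of_le (has n) ((hψs n).sub (hχm n)) (hB n) hn.le).trans hBδ
  · rw [← ip_sub_right hψ (hχm 0) ha]
    exact (abs_ip_le_of_le ha (hψ.sub (hχm 0)) le_rfl hψχ.le).trans haδ

lemma tendsto_ip_sub_self {ψs : ℕ → E → ℝ} {ψ χ : E → ℝ}
    (hψs : ∀ n, MemLp (ψs n) 2 (fr.ν n)) (hψ : MemLp ψ 2 (fr.ν 0)) (hχ : χ ∈ fr.F)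
    (hnorm : Tendsto (fun n => ip (fr.ν n) (ψs n) (ψs n)) atTop (𝓝 (ip (fr.ν 0) ψ ψ)))
    (hpair : Tendsto (fun n => ip (fr.ν n) (ψs n) χ) atTop (𝓝 (ip (fr.ν 0) ψ χ))) :
    Tendsto (fun n => ip (fr.ν n) (fun x => ψs n x - χ x) (fun x => ψs n x - χ x)) atTop
      (𝓝 (ip (fr.ν 0) (fun x => ψ x - χ x) (fun x => ψ x - χ x))) := by
  have hχm := fr.F_memL2 χ hχ
  rw [ip_sub_self hψ (hχm 0)]
  exact ((hnorm.sub (hpair.const_mul 2)).add (fr.F_tendsto χ hχ)).congr fun n =>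
    (ip_sub_self (hψs n) (hχm n)).symm

lemma tendsto_ip_of_mem_C {g h : E → ℝ} (hg : g ∈ fr.C) (hh : h ∈ fr.C) :
    Tendsto (fun n => ip (fr.ν n) g h) atTop (𝓝 (ip (fr.ν 0) g h)) := by
  obtain ⟨B, hB⟩ := hg.1.2.2.bddAbove_range
  exact fr.tendsto_ip_of_approx (as := fun _ => g) (ψs := fun _ => h) hg.1.2.1
    (fun n => hB ⟨n, rfl⟩) (hg.1.2.1 0) hh.1.1 (hh.1.2.1 0) hh.1.2.1 hg.2.2
    fun χ hχ => fr.tendsto_ip_sub_self hh.1.2.1 (hh.1.2.1 0) hχ hh.1.2.2 (hh.2.2 χ hχ)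

lemma sConv_const {g : E → ℝ} (hg : g ∈ fr.C) : fr.SConv (fun _ => g) g :=
  ⟨fun _ hχ => fr.tendsto_ip_of_mem_C hg hχ, fr.tendsto_ip_of_mem_C hg hg⟩

lemma smul_add_mem_C {g h : E → ℝ} (hg : g ∈ fr.C) (hh : h ∈ fr.C) (s : ℝ) :
    (fun x => s * g x + h x) ∈ fr.C := by
  have hgm := fr.memLp_of_mem_C hg
  have hhm := fr.memLp_of_mem_C hh
  refine ⟨⟨(hg.1.1.const_mul s).add hh.1.1, fun n => ((hgm n).const_mul s).add (hhm n), ?_⟩,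
    fun n hn => ?_, fun χ hχ => ?_⟩
  · rw [ip_smul_add_self (hgm 0) (hhm 0)]
    exact (((hg.1.2.2.const_mul (s ^ 2)).add ((fr.tendsto_ip_of_mem_C hg hh).const_mul (2 * s))).add
      hh.1.2.2).congr fun n => (ip_smul_add_self (hgm n) (hhm n) s).symm
  · obtain ⟨g', hg'F, hgg'⟩ := hg.2.1 n hn
    obtain ⟨h', hh'F, hhh'⟩ := hh.2.1 n hn
    refine ⟨_, fr.F_linear g' hg'F h' hh'F s 1, ?_⟩
    filter_upwards [hgg', hhh'] with x hgx hhx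
    rw [hgx, hhx, one_mul]
  · have hχm := fr.F_memL2 χ hχ
    rw [ip_smul_add_left (hgm 0) (hhm 0) (hχm 0)]
    exact (((hg.2.2 χ hχ).const_mul s).add (hh.2.2 χ hχ)).congr fun n =>
      (ip_smul_add_left (hgm n) (hhm n) (hχm n) s).symm

variable {fr}

lemma WConv.smul_add {φs ψs : ℕ → E → ℝ} {φ ψ : E → ℝ} (hφw : fr.WConv φs φ)
    (hψw : fr.WConv ψs ψ) (hφs : ∀ n, MemLp (φs n) 2 (fr.ν n))
    (hψs : ∀ n, MemLp (ψs n) 2 (fr.ν n)) (hφ : MemLp φ 2 (fr.ν 0)) (hψ : MemLp ψ 2 (fr.ν 0))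
    (s : ℝ) : fr.WConv (fun n x => s * φs n x + ψs n x) (fun x => s * φ x + ψ x) := by
  intro χ hχ
  rw [ip_smul_add_left hφ hψ (fr.memLp_of_mem_C hχ 0)]
  exact (((hφw χ hχ).const_mul s).add (hψw χ hχ)).congr fun n =>
    (ip_smul_add_left (hφs n) (hψs n) (fr.memLp_of_mem_C hχ n) s).symm

lemma WConv.tendsto_ip_of_sConv {as ψs : ℕ → E → ℝ} {a ψ : E → ℝ} (hw : fr.WConv as a)
    (hs : fr.SConv ψs ψ) (has : ∀ n, MemLp (as n) 2 (fr.ν n))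
    (hB : ∃ B, ∀ n, ip (fr.ν n) (as n) (as n) ≤ B) (ha : MemLp a 2 (fr.ν 0))
    (hψm : Measurable ψ) (hψ : MemLp ψ 2 (fr.ν 0)) (hψs : ∀ n, MemLp (ψs n) 2 (fr.ν n)) :
    Tendsto (fun n => ip (fr.ν n) (as n) (ψs n)) atTop (𝓝 (ip (fr.ν 0) a ψ)) := by
  obtain ⟨B, hB⟩ := hB
  exact fr.tendsto_ip_of_approx has hB ha hψm hψ hψs (fun χ hχ => hw χ (fr.mem_C_of_mem_F hχ))
    fun χ hχ => fr.tendsto_ip_sub_self hψs hψ hχ hs.2 (hs.1 χ (fr.mem_C_of_mem_F hχ))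

end Frame

namespace Frame

variable (fr : Frame E)

def glue (nk : ℕ → ℕ) (f : ℕ → E → ℝ) : E → ℝ :=
  fun x => ∑' k, (fr.En (nk k)).indicator (f k) x

variable {fr} {nk : ℕ → ℕ} {f : ℕ → E → ℝ}

lemma ae_mem_En (n : ℕ) : ∀ᵐ x ∂fr.ν n, x ∈ fr.En n := mem_ae_iff.mpr (fr.nullEn n)

lemma notMem_En_of_mem_En {m n : ℕ} {x : E} (hmn : m ≠ n) (hx : x ∈ fr.En m) : x ∉ fr.En n :=
  Set.disjoint_left.mp (fr.disjEn m n hmn) hx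

lemma hasSum_glue_of_mem (hnk : Function.Injective nk) {k : ℕ} {x : E} (hx : x ∈ fr.En (nk k)) :
    HasSum (fun j => (fr.En (nk j)).indicator (f j) x) (f k x) := by
  convert hasSum_single k fun j hj => Set.indicator_of_notMem
    (notMem_En_of_mem_En (hnk.ne (Ne.symm hj)) hx) (f j)
  exact (Set.indicator_of_mem hx _).symm

lemma glue_eq_of_mem (hnk : Function.Injective nk) {k : ℕ} {x : E} (hx : x ∈ fr.En (nk k)) :
    fr.glue nk f x = f k x :=
  (hasSum_glue_of_mem hnk hx).tsum_eq

lemma glue_eq_zero (hx : ∀ k, x ∉ fr.En (nk k)) : fr.glue nk f x = 0 := by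
  simp only [glue, Set.indicator_of_notMem (hx _), tsum_zero]

lemma measurable_glue (hnk : Function.Injective nk) (hf : ∀ k, Measurable (f k)) :
    Measurable (fr.glue nk f) := by
  refine measurable_of_tendsto_metrizable (fun K => Finset.measurable_sum (Finset.range K)
    fun k _ => (hf k).indicator (fr.measEn (nk k))) (tendsto_pi_nhds.mpr fun x => ?_)
  by_cases hx : ∃ k, x ∈ fr.En (nk k)
  · obtain ⟨k, hk⟩ := hx
    rw [glue_eq_of_mem hnk hk]
    simpa only [Finset.sum_apply] using (hasSum_glue_of_mem hnk hk).tendsto_sum_nat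
  · simp only [not_exists] at hx
    simp only [glue_eq_zero hx, Set.indicator_of_notMem (hx _),
      Finset.sum_const_zero, tendsto_const_nhds]

lemma glue_ae_eq (hnk : Function.Injective nk) (k : ℕ) : fr.glue nk f =ᵐ[fr.ν (nk k)] f k :=
  (ae_mem_En (nk k)).mono fun _ hx => glue_eq_of_mem hnk hx

lemma glue_ae_eq_zero {n : ℕ} (hn : n ∉ Set.range nk) : fr.glue nk f =ᵐ[fr.ν n] 0 :=
  (ae_mem_En n).mono fun _ hx => glue_eq_zero fun k hk =>
    notMem_En_of_mem_En (fun h => hn ⟨k, h⟩) hk hx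

lemma glue_mem_C (hnk : StrictMono nk) (hnk0 : ∀ k, nk k ≠ 0) (hf : ∀ k, f k ∈ fr.F)
    (hlim : Tendsto (fun k => ip (fr.ν (nk k)) (f k) (f k)) atTop (𝓝 0)) :
    fr.glue nk f ∈ fr.C := by
  have hzero : ∀ {n} (g : E → ℝ), n ∉ Set.range nk → ip (fr.ν n) (fr.glue nk f) g = 0 :=
    fun g hn => by rw [ip_congr_left (glue_ae_eq_zero hn)]; simp [ip]
  have h0 : 0 ∉ Set.range nk := fun ⟨k, hk⟩ => hnk0 k hk
  have hmem : ∀ n, MemLp (fr.glue nk f) 2 (fr.ν n) := by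
    intro n
    by_cases hn : n ∈ Set.range nk
    · obtain ⟨k, rfl⟩ := hn
      exact (fr.F_memL2 _ (hf k) _).ae_eq (glue_ae_eq hnk.injective k).symm
    · exact MemLp.zero.ae_eq (glue_ae_eq_zero hn).symm
  have hnorm : Tendsto (fun n => ip (fr.ν n) (fr.glue nk f) (fr.glue nk f)) atTop (𝓝 0) :=
    tendsto_of_comp_strictMono_of_eq_off_range hnk (fun n hn => hzero _ hn) <|
      hlim.congr fun k => by
        rw [Function.comp_apply, ip_congr_left (glue_ae_eq hnk.injective k),
          ip_congr_right (glue_ae_eq hnk.injective k)]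
  refine ⟨⟨measurable_glue hnk.injective fun k => fr.F_measurable _ (hf k), hmem,
    by rwa [hzero _ h0]⟩, fun n _ => ?_, fun χ hχ => ?_⟩
  · by_cases hn : n ∈ Set.range nk
    · obtain ⟨k, rfl⟩ := hn
      exact ⟨f k, hf k, glue_ae_eq hnk.injective k⟩
    · exact ⟨0, fr.zero_mem_F (hf 0), glue_ae_eq_zero hn⟩
  · rw [hzero _ h0]
    refine squeeze_zero_norm
      (fun n => abs_ip_le_of_le (hmem n) (fr.F_memL2 χ hχ n) le_rfl le_rfl) ?_
    simpa using hnorm.sqrt.mul (fr.F_tendsto χ hχ).sqrt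

/-- Gliding hump: along a subsequence with `‖φ_{n_k}‖² > (k + 1)³`, gluing the functions
`(k + 1) φ_{n_k} / ‖φ_{n_k}‖²` on the disjoint sets `E_{n_k}` gives an element of `𝓒` whose
pairing with `φ_{n_k}` is `k + 1`. -/
lemma exists_ip_self_le_of_wConv {φs : ℕ → E → ℝ} {φ : E → ℝ} (hφs : ∀ n, φs n ∈ fr.C)
    (hw : fr.WConv φs φ) : ∃ B, ∀ n, ip (fr.ν n) (φs n) (φs n) ≤ B := by
  set v := fun n => ip (fr.ν n) (φs n) (φs n)
  by_contra hunb
  have hfreq : ∀ k : ℕ, ∃ᶠ n in atTop, n ≠ 0 ∧ ((k : ℝ) + 1) ^ 3 < v n := by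
    intro k
    by_contra hk
    refine hunb ((isBoundedUnder_of_eventually_le (a := ((k : ℝ) + 1) ^ 3) ?_).bddAbove_range.imp
      fun B hB n => hB ⟨n, rfl⟩)
    filter_upwards [not_frequently.mp hk, eventually_ne_atTop 0] with n hn hn0
    exact not_lt.mp fun h => hn ⟨hn0, h⟩
  obtain ⟨nk, hnk, hbig⟩ := extraction_forall_of_frequently hfreq
  have hv : ∀ k, 0 < v (nk k) := fun k => lt_trans (by positivity) (hbig k).2
  choose g hgF hg using fun k => (hφs (nk k)).2.1 (nk k) (Nat.one_le_iff_ne_zero.mpr (hbig k).1)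
  set c := fun k : ℕ => ((k : ℝ) + 1) / v (nk k)
  have hcg : ∀ k, (fun x => c k * g k x) =ᵐ[fr.ν (nk k)] fun x => c k * φs (nk k) x :=
    fun k => (hg k).mono fun x hx => by simp only [hx]
  have hψC : fr.glue nk (fun k x => c k * g k x) ∈ fr.C := by
    refine glue_mem_C hnk (fun k => (hbig k).1) (fun k => fr.const_mul_mem_F (hgF k) _) ?_
    refine squeeze_zero (fun k => ip_self_nonneg ((fr.F_memL2 _ (hgF k) _).const_mul _))
      (fun k => ?_) tendsto_one_div_add_atTop_nhds_zero_nat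
    rw [ip_congr_left (hcg k), ip_congr_right (hcg k), ip_const_mul_left, ip_comm,
      ip_const_mul_left]
    have hv3 := (hbig k).2
    change (k + 1) / v (nk k) * ((k + 1) / v (nk k) * v (nk k)) ≤ 1 / (k + 1)
    rw [div_mul_cancel₀ _ (hv k).ne', div_mul_eq_mul_div, div_le_div_iff₀ (hv k) (by positivity)]
    nlinarith
  have hpair : ∀ k, ip (fr.ν (nk k)) (φs (nk k)) (fr.glue nk fun k x => c k * g k x) = k + 1 := by
    intro k
    rw [ip_congr_right ((glue_ae_eq hnk.injective k).trans (hcg k)), ip_comm, ip_const_mul_left]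
    exact div_mul_cancel₀ _ (hv k).ne'
  have hlim := (hw _ hψC).comp hnk.tendsto_atTop
  simp only [Function.comp_def, hpair] at hlim
  exact not_tendsto_nhds_of_tendsto_atTop
    (tendsto_atTop_add_const_right atTop 1 tendsto_natCast_atTop_atTop) _ hlim

end Frame

section FormConvergence

variable {fr : Frame E} {sg : ∀ n, Semigroup2 (fr.ν n)}

lemma exists_abs_S_le {ps qs : ℕ → E → ℝ} (hqs : ∀ n, MemLp (qs n) 2 (fr.ν n))
    (hA : ∃ M, ∀ n, ip (fr.ν n) ((sg n).Af (ps n)) ((sg n).Af (ps n)) ≤ M)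
    (hB : ∃ B, ∀ n, ip (fr.ν n) (qs n) (qs n) ≤ B) :
    ∃ C, ∀ n, |(sg n).S (ps n) (qs n)| ≤ C := by
  obtain ⟨M, hM⟩ := hA
  obtain ⟨B, hB⟩ := hB
  refine ⟨√M * √B, fun n => ?_⟩
  rw [Semigroup2.S_eq_neg_ip, abs_neg]
  exact abs_ip_le_of_le ((sg n).memLp_Af _) (hqs n) (hM n) (hB n)

lemma PreConv.le_liminf (hpre : PreConv fr sg) {φs : ℕ → E → ℝ} {φ : E → ℝ}
    (hφm : Measurable φ) (hφ : MemLp φ 2 (fr.ν 0))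
    (hφs : ∀ n, φs n ∈ fr.C ∧ (sg n).memD (φs n)) (hw : fr.WConv φs φ)
    (hA : ∃ M, ∀ n, ip (fr.ν n) ((sg n).Af (φs n)) ((sg n).Af (φs n)) ≤ M) :
    (sg 0).S φ φ ≤ liminf (fun n => (sg n).S (φs n) (φs n)) atTop :=
  (hpre.1 φ hφm hφ id strictMono_id φs hφs hw hA).2

lemma PreConv.tendsto_S_self (hpre : PreConv fr sg) {ψs : ℕ → E → ℝ} {ψ : E → ℝ}
    (hψm : Measurable ψ) (hψ : MemLp ψ 2 (fr.ν 0))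
    (hψs : ∀ n, ψs n ∈ fr.C ∧ (sg n).memD (ψs n)) (hw : fr.WConv ψs ψ)
    (hA : ∃ M, ∀ n, ip (fr.ν n) ((sg n).Af (ψs n)) ((sg n).Af (ψs n)) ≤ M)
    (hlimsup : limsup (fun n => (sg n).S (ψs n) (ψs n)) atTop ≤ (sg 0).S ψ ψ) :
    Tendsto (fun n => (sg n).S (ψs n) (ψs n)) atTop (𝓝 ((sg 0).S ψ ψ)) := by
  obtain ⟨C, hC⟩ := exists_abs_S_le (fun n => fr.memLp_of_mem_C (hψs n).1 n) hA
    (fr.exists_ip_self_le_of_wConv (fun n => (hψs n).1) hw)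
  exact tendsto_of_le_liminf_of_limsup_le (hpre.le_liminf hψm hψ hψs hw hA) hlimsup
    (isBoundedUnder_of ⟨C, fun n => (abs_le.mp (hC n)).2⟩)
    (isBoundedUnder_of ⟨-C, fun n => (abs_le.mp (hC n)).1⟩)

lemma PreConv.tendsto_S_swap (hpre : PreConv fr sg) {φs ψs : ℕ → E → ℝ}
    {φ ψ : E → ℝ} (hφm : Measurable φ) (hφ : MemLp φ 2 (fr.ν 0)) (hφD : (sg 0).memD φ)
    (hψm : Measurable ψ) (hψ : MemLp ψ 2 (fr.ν 0)) (hψD : (sg 0).memD ψ)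
    (hφs : ∀ n, φs n ∈ fr.C ∧ (sg n).memD (φs n)) (hψs : ∀ n, ψs n ∈ fr.C ∧ (sg n).memD (ψs n))
    (hφw : fr.WConv φs φ) (hψw : fr.WConv ψs ψ)
    (hAφ : ∃ M, ∀ n, ip (fr.ν n) ((sg n).Af (φs n)) ((sg n).Af (φs n)) ≤ M)
    (hAψ : ∃ M, ∀ n, ip (fr.ν n) ((sg n).Af (ψs n)) ((sg n).Af (ψs n)) ≤ M)
    (hQ : Tendsto (fun n => (sg n).S (ψs n) (ψs n)) atTop (𝓝 ((sg 0).S ψ ψ)))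
    (hY : Tendsto (fun n => (sg n).S (φs n) (ψs n)) atTop (𝓝 ((sg 0).S φ ψ))) :
    Tendsto (fun n => (sg n).S (ψs n) (φs n)) atTop (𝓝 ((sg 0).S ψ φ)) := by
  have hφsm : ∀ n, MemLp (φs n) 2 (fr.ν n) := fun n => fr.memLp_of_mem_C (hφs n).1 n
  have hψsm : ∀ n, MemLp (ψs n) 2 (fr.ν n) := fun n => fr.memLp_of_mem_C (hψs n).1 n
  have hBφ := fr.exists_ip_self_le_of_wConv (fun n => (hφs n).1) hφw
  have hBψ := fr.exists_ip_self_le_of_wConv (fun n => (hψs n).1) hψw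
  have hsum : Tendsto (fun n => (sg n).S (ψs n) (φs n) + (sg n).S (φs n) (ψs n)) atTop
      (𝓝 ((sg 0).S ψ φ + (sg 0).S φ ψ)) := by
    refine tendsto_of_le_liminf_quadratic (c₀ := (sg 0).S φ φ) hQ ?_
      (exists_abs_S_le hφsm hAφ hBφ) fun t => ?_
    · obtain ⟨C₁, hC₁⟩ := exists_abs_S_le hφsm hAψ hBφ
      obtain ⟨C₂, hC₂⟩ := exists_abs_S_le hψsm hAφ hBψ
      exact ⟨C₁ + C₂, fun n => (abs_add_le _ _).trans (add_le_add (hC₁ n) (hC₂ n))⟩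
    obtain ⟨Mφ, hMφ⟩ := hAφ
    obtain ⟨Mψ, hMψ⟩ := hAψ
    have hle := hpre.le_liminf (φ := fun x => t * ψ x + φ x) ((hψm.const_mul t).add hφm)
      ((hψ.const_mul t).add hφ)
      (fun n => ⟨fr.smul_add_mem_C (hψs n).1 (hφs n).1 t,
        (sg n).memD_smul_add (hψsm n) (hφsm n) (hψs n).2 (hφs n).2 t⟩)
      (hψw.smul_add hφw hψsm hφsm hψ hφ t)
      ⟨2 * (t ^ 2 * Mψ + Mφ), fun n =>
        ((sg n).ip_Af_smul_add_self_le (hψsm n) (hφsm n) (hψs n).2 (hφs n).2 t).trans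
          (by gcongr; exacts [hMψ n, hMφ n])⟩
    have hexpand : ∀ n, (sg n).S (fun x => t * ψs n x + φs n x) (fun x => t * ψs n x + φs n x)
        = (sg n).S (ψs n) (ψs n) * t ^ 2 + ((sg n).S (ψs n) (φs n) + (sg n).S (φs n) (ψs n)) * t
          + (sg n).S (φs n) (φs n) := fun n => by
      rw [(sg n).S_smul_add_self (hψsm n) (hφsm n) (hψs n).2 (hφs n).2]
      ring
    rw [(sg 0).S_smul_add_self hψ hφ hψD hφD] at hle
    simp only [hexpand] at hle
    linarith
  simpa using hsum.sub hY

end FormConvergence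

theorem condIV_implies_condIII_general (fr : Frame E) (sg : ∀ n, Semigroup2 (fr.ν n))
    (hpre : PreConv fr sg) (h4 : CondIV fr sg) : CondIII fr sg := by
  intro β hβ u hum hu huD us hus hwex hAu hH ψ hψm hψ hψD ψs hψs hψS hAψ hlimsup
  have husC : ∀ n, us n ∈ fr.C := fun n => (hus n).1
  have husm : ∀ n, MemLp (us n) 2 (fr.ν n) := fun n => fr.memLp_of_mem_C (husC n) n
  have hψsm : ∀ n, MemLp (ψs n) 2 (fr.ν n) := fun n => fr.memLp_of_mem_C (hψs n).1 n
  have hSb : ∀ χ ∈ fr.C, Tendsto (fun n => (sg n).Sb β (us n) χ) atTop (𝓝 ((sg 0).Sb β u χ)) :=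
    fun χ hχ => hH χ hχ _ (fun _ => hχ) (fr.sConv_const hχ)
  have huw : fr.WConv us u := h4 β hβ u hum hu huD us hus hwex hAu fun χ hχ => by
    rw [← (sg 0).Sb_eq_ip hu (fr.memLp_of_mem_C hχ 0)]
    exact (hSb χ hχ).congr fun n => (sg n).Sb_eq_ip (husm n) (fr.memLp_of_mem_C hχ n) β
  have hAuw : fr.WConv (fun n => (sg n).Af (us n)) ((sg 0).Af u) := fun χ hχ => by
    simp only [Semigroup2.ip_Af_eq_sub_Sb _ β]
    exact ((huw χ hχ).const_mul β).sub (hSb χ hχ)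
  have hip : Tendsto (fun n => ip (fr.ν n) (us n) (ψs n)) atTop (𝓝 (ip (fr.ν 0) u ψ)) :=
    huw.tendsto_ip_of_sConv hψS husm (fr.exists_ip_self_le_of_wConv husC huw) hu hψm hψ hψsm
  have hY : Tendsto (fun n => (sg n).S (us n) (ψs n)) atTop (𝓝 ((sg 0).S u ψ)) := by
    simp only [Semigroup2.S_eq_neg_ip]
    exact (hAuw.tendsto_ip_of_sConv hψS (fun n => (sg n).memLp_Af _) hAu
      ((sg 0).memLp_Af u) hψm hψ hψsm).neg
  have hQ := hpre.tendsto_S_self hψm hψ hψs hψS.1 hAψ hlimsup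
  have hX := hpre.tendsto_S_swap hum hu huD hψm hψ hψD (fun n => ⟨husC n, (hus n).2.1⟩)
    hψs huw hψS.1 hAu hAψ hQ hY
  simp only [Semigroup2.Sb, ip_comm (ψs _), ip_comm ψ]
  exact (hip.const_mul β).add hX

/-- Lemma 2.6: if the forms `S n` pre-converge to `S`, then condition (iv)
implies condition (iii). -/
theorem condIV_implies_condIII (fr : Frame E) (sg : ∀ n, Semigroup2 (fr.ν n))
    (hcontr : ∀ n, (sg n).IsContraction)
    (hpre : PreConv fr sg) (h4 : CondIV fr sg) : CondIII fr sg :=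
  condIV_implies_condIII_general fr sg hpre h4

end Mosco
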